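/- arXiv:2402.00526 — 2 statements merged into one kernel-verified Lean document; each statement's English description precedes it below -/
import Mathlib

section
/- With δx, δp, δu as the solutions of the linearized optimality-difference system (δx' = 𝐀_Σ δx + δ𝐀 ℰ(x_σ+g) + 𝐁 δu, δx(0)=0; δp' = −𝐀_Σ* δp − (1/N) δ𝐀* ℰ p_σ − (1/N) Q_e*Q_e δx, δp(T) = (1/N) P_e*P_e δx(T); δu = −𝐁* δp), the following energy identity holds: (1/N)‖Q_e δx‖²_{L²(0,T)} + ‖δu‖²_{L²(0,T)} + (1/N)‖P_e δx(T)‖² = −⟨δ𝐀* (1/N) ℰ p_σ, δx⟩_{L²(0,T)} + ⟨δ𝐀 ℰ(x_σ + g), δp⟩_{L²(0,T)}. -/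
open ContinuousLinearMap MeasureTheory
open scoped RealInnerProductSpace

/-- Energy identity for the linearized optimality-difference system: with
`δx' = 𝐀_Σ δx + δ𝐀 ℰ(x_σ+g) + 𝐁 δu`, `δx(0)=0`,
`δp' = −𝐀_Σ* δp − (1/N) δ𝐀* ℰ p_σ − (1/N) Q_e*Q_e δx`, `δp(T) = (1/N) P_e*P_e δx(T)`,
`δu = −𝐁* δp`, one has
`(1/N)‖Q_e δx‖²_{L²} + ‖δu‖²_{L²} + (1/N)‖P_e δx(T)‖²
   = −⟨δ𝐀*(1/N)ℰ p_σ, δx⟩_{L²} + ⟨δ𝐀 ℰ(x_σ+g), δp⟩_{L²}`. -/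
theorem optimality_difference_energy_identity
    {E Um : Type*} [NormedAddCommGroup E] [InnerProductSpace ℝ E] [FiniteDimensional ℝ E]
    [NormedAddCommGroup Um] [InnerProductSpace ℝ Um] [FiniteDimensional ℝ Um]
    {N : ℕ} (hN : 0 < N) {T : ℝ} (hT : 0 < T)
    (Ai : Fin N → E →L[ℝ] E) (Asig : E →L[ℝ] E)
    (B : Um →L[ℝ] E) (Q P : E →L[ℝ] E)
    (g xsig psig : ℝ → E)
    (dx dp : ℝ → Fin N → E) (du : ℝ → Um)
    (hcx : Continuous dx) (hcp : Continuous dp) (hcu : Continuous du)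
    (hcpsig : Continuous psig) (hcxsig : Continuous xsig) (hcg : Continuous g)
    (hdx0 : dx 0 = 0)
    (hdx : ∀ t ∈ Set.Icc (0:ℝ) T, HasDerivAt dx
      (fun i => Ai i (dx t i) + (Ai i (xsig t + g t) - Asig (xsig t + g t)) + B (du t)) t)
    (hdp : ∀ t ∈ Set.Icc (0:ℝ) T, HasDerivAt dp
      (fun i => -(adjoint (Ai i) (dp t i))
        - (1/(N:ℝ)) • (adjoint (Ai i) (psig t) - adjoint Asig (psig t))
        - (1/(N:ℝ)) • (adjoint Q (Q (dx t i)))) t)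
    (hdpT : dp T = fun i => (1/(N:ℝ)) • (adjoint P (P (dx T i))))
    (hdu : ∀ t ∈ Set.Icc (0:ℝ) T, du t = -(adjoint B (∑ i, dp t i))) :
    (1/(N:ℝ)) * (∫ t in (0:ℝ)..T, ∑ i, ‖Q (dx t i)‖^2)
      + (∫ t in (0:ℝ)..T, ‖du t‖^2)
      + (1/(N:ℝ)) * ∑ i, ‖P (dx T i)‖^2
    = -(∫ t in (0:ℝ)..T, ∑ i,
          ⟪(1/(N:ℝ)) • (adjoint (Ai i) (psig t) - adjoint Asig (psig t)), dx t i⟫)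
      + ∫ t in (0:ℝ)..T, ∑ i,
          ⟪Ai i (xsig t + g t) - Asig (xsig t + g t), dp t i⟫ := by
  -- component continuity
  have hcxi : ∀ i, Continuous fun t => dx t i := fun i => (continuous_apply i).comp hcx
  have hcpi : ∀ i, Continuous fun t => dp t i := fun i => (continuous_apply i).comp hcp
  -- the four integrands
  set S1 : ℝ → ℝ := fun t => ∑ i, ‖Q (dx t i)‖^2 with hS1
  set S2 : ℝ → ℝ := fun t => ‖du t‖^2 with hS2
  set S3 : ℝ → ℝ := fun t =>
    ∑ i, ⟪(1/(N:ℝ)) • (adjoint (Ai i) (psig t) - adjoint Asig (psig t)), dx t i⟫ with hS3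
  set S4 : ℝ → ℝ := fun t =>
    ∑ i, ⟪Ai i (xsig t + g t) - Asig (xsig t + g t), dp t i⟫ with hS4
  have hcS1 : Continuous S1 := by
    apply continuous_finset_sum; intro i _
    exact (Q.continuous.comp (hcxi i)).norm.pow 2
  have hcS2 : Continuous S2 := hcu.norm.pow 2
  have hcS3 : Continuous S3 := by
    apply continuous_finset_sum; intro i _
    exact (continuous_const.smul (((adjoint (Ai i)).continuous.comp hcpsig).sub
      ((adjoint Asig).continuous.comp hcpsig))).inner (hcxi i)
  have hcS4 : Continuous S4 := by
    apply continuous_finset_sum; intro i _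
    exact (((Ai i).continuous.comp (hcxsig.add hcg)).sub
      (Asig.continuous.comp (hcxsig.add hcg))).inner (hcpi i)
  -- the derivative of F t = ∑ i, ⟪dp t i, dx t i⟫
  set G : ℝ → ℝ := fun t => -((1/(N:ℝ)) * S1 t) - S2 t - S3 t + S4 t with hG
  have hFderiv : ∀ t ∈ Set.uIcc (0:ℝ) T,
      HasDerivAt (fun t => ∑ i, ⟪dp t i, dx t i⟫) (G t) t := by
    intro t ht
    rw [Set.uIcc_of_le hT.le] at ht
    have hd : HasDerivAt (fun t => ∑ i, ⟪dp t i, dx t i⟫)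
        (∑ i, (⟪dp t i, Ai i (dx t i) + (Ai i (xsig t + g t) - Asig (xsig t + g t)) + B (du t)⟫
          + ⟪-(adjoint (Ai i) (dp t i))
              - (1/(N:ℝ)) • (adjoint (Ai i) (psig t) - adjoint Asig (psig t))
              - (1/(N:ℝ)) • (adjoint Q (Q (dx t i))), dx t i⟫)) t := by
      apply HasDerivAt.fun_sum
      intro i _
      exact (hasDerivAt_pi.mp (hdp t ht) i).inner ℝ (hasDerivAt_pi.mp (hdx t ht) i)
    convert hd using 1
    have expand : ∀ i : Fin N,
        (⟪dp t i, Ai i (dx t i) + (Ai i (xsig t + g t) - Asig (xsig t + g t)) + B (du t)⟫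
          + ⟪-(adjoint (Ai i) (dp t i))
              - (1/(N:ℝ)) • (adjoint (Ai i) (psig t) - adjoint Asig (psig t))
              - (1/(N:ℝ)) • (adjoint Q (Q (dx t i))), dx t i⟫)
        = ⟪Ai i (xsig t + g t) - Asig (xsig t + g t), dp t i⟫
          + ⟪dp t i, B (du t)⟫
          - ⟪(1/(N:ℝ)) • (adjoint (Ai i) (psig t) - adjoint Asig (psig t)), dx t i⟫
          - (1/(N:ℝ)) * ‖Q (dx t i)‖^2 := by
      intro i
      have h1 : ⟪adjoint (Ai i) (dp t i), dx t i⟫ = ⟪dp t i, Ai i (dx t i)⟫ :=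
        adjoint_inner_left _ _ _
      have h2 : ⟪adjoint Q (Q (dx t i)), dx t i⟫ = ‖Q (dx t i)‖^2 := by
        rw [adjoint_inner_left, real_inner_self_eq_norm_sq]
      have h3 : ⟪dp t i, Ai i (xsig t + g t) - Asig (xsig t + g t)⟫
          = ⟪Ai i (xsig t + g t) - Asig (xsig t + g t), dp t i⟫ := real_inner_comm _ _
      simp only [inner_add_right, inner_sub_left, inner_neg_left, real_inner_smul_left]
      rw [h1, h2, h3]
      simp only [inner_sub_left]
      ring
    rw [Finset.sum_congr rfl (fun i _ => expand i)]
    have hBu : adjoint B (∑ i, dp t i) = -(du t) := by rw [hdu t ht]; simp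
    have hsumBu : ∑ i : Fin N, ⟪dp t i, B (du t)⟫ = -‖du t‖^2 := by
      rw [← sum_inner, ← adjoint_inner_left B, hBu]
      simp [real_inner_self_eq_norm_sq]
    rw [Finset.sum_sub_distrib, Finset.sum_sub_distrib, Finset.sum_add_distrib, hsumBu,
      ← Finset.mul_sum]
    simp only [hG, hS1, hS2, hS3, hS4]
    ring
  have hGcont : Continuous G :=
    (((continuous_const.mul hcS1).neg.sub hcS2).sub hcS3).add hcS4
  have key : ∫ t in (0:ℝ)..T, G t = (∑ i, ⟪dp T i, dx T i⟫) - ∑ i, ⟪dp 0 i, dx 0 i⟫ :=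
    intervalIntegral.integral_eq_sub_of_hasDerivAt hFderiv (hGcont.intervalIntegrable 0 T)
  have hF0 : ∑ i : Fin N, ⟪dp 0 i, dx 0 i⟫ = 0 := by simp [hdx0]
  have hFT : ∑ i : Fin N, ⟪dp T i, dx T i⟫ = (1/(N:ℝ)) * ∑ i, ‖P (dx T i)‖^2 := by
    simp only [hdpT, Finset.mul_sum]
    refine Finset.sum_congr rfl fun i _ => ?_
    rw [real_inner_smul_left, adjoint_inner_left, real_inner_self_eq_norm_sq]
  have hi1 : IntervalIntegrable S1 volume 0 T := hcS1.intervalIntegrable 0 T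
  have hi2 : IntervalIntegrable S2 volume 0 T := hcS2.intervalIntegrable 0 T
  have hi3 : IntervalIntegrable S3 volume 0 T := hcS3.intervalIntegrable 0 T
  have hi4 : IntervalIntegrable S4 volume 0 T := hcS4.intervalIntegrable 0 T
  have hsplit : ∫ t in (0:ℝ)..T, G t =
      -((1/(N:ℝ)) * ∫ t in (0:ℝ)..T, S1 t) - (∫ t in (0:ℝ)..T, S2 t)
      - (∫ t in (0:ℝ)..T, S3 t) + ∫ t in (0:ℝ)..T, S4 t := by
    have c1 : Continuous fun t => -((1/(N:ℝ)) * S1 t) := (continuous_const.mul hcS1).neg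
    have hiA : IntervalIntegrable (fun t => -((1/(N:ℝ)) * S1 t)) volume 0 T :=
      c1.intervalIntegrable 0 T
    have hiB : IntervalIntegrable (fun t => -((1/(N:ℝ)) * S1 t) - S2 t) volume 0 T :=
      (c1.sub hcS2).intervalIntegrable 0 T
    have hiC : IntervalIntegrable (fun t => -((1/(N:ℝ)) * S1 t) - S2 t - S3 t) volume 0 T :=
      ((c1.sub hcS2).sub hcS3).intervalIntegrable 0 T
    rw [hG,
      intervalIntegral.integral_add hiC hi4,
      intervalIntegral.integral_sub hiB hi3,
      intervalIntegral.integral_sub hiA hi2,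
      intervalIntegral.integral_neg, intervalIntegral.integral_const_mul]
  rw [key, hF0, hFT] at hsplit
  linarith
end

section
/- Let a : V × V → ℝ be a continuous bilinear form on a Hilbert space V continuously embedded in H, satisfying a(v, v) + ρ‖v‖²_H ≥ θ‖v‖²_V for all v ∈ V with θ > 0. If x : [0,T] → V is differentiable (in H) and satisfies ⟨x'(t), x(t)⟩_H = −a(x(t), x(t)) + ⟨r(t), x(t)⟩ where |⟨r(t), x(t)⟩| ≤ c(t)‖x(t)‖_V + ½‖x(t)‖²_H, then ½ (d/dt)‖x(t)‖²_H ≤ (ρ + ½)‖x(t)‖²_H − (θ/2)‖x(t)‖²_V + c(t)²/(2θ). -/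
open scoped RealInnerProductSpace

/-- Gårding-type energy inequality: if `a` is a continuous bilinear form on `V ⊂ H`
with `a(v,v) + ρ‖v‖²_H ≥ θ‖v‖²_V`, and `x` satisfies
`⟨x'(t), x(t)⟩_H = −a(x(t), x(t)) + r(t)` with `|r(t)| ≤ c(t)‖x(t)‖_V + ½‖x(t)‖²_H`,
then `½ (d/dt)‖x(t)‖²_H ≤ (ρ+½)‖x(t)‖²_H − (θ/2)‖x(t)‖²_V + c(t)²/(2θ)`. -/
theorem garding_energy_inequality
    {V H : Type*} [NormedAddCommGroup V] [NormedSpace ℝ V]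
    [NormedAddCommGroup H] [InnerProductSpace ℝ H]
    {T ρ θ : ℝ} (hT : 0 < T) (hθ : 0 < θ)
    (ι : V →L[ℝ] H)
    (a : V →L[ℝ] V →L[ℝ] ℝ)
    (hgard : ∀ v : V, θ * ‖v‖^2 ≤ a v v + ρ * ‖ι v‖^2)
    (c : ℝ → ℝ) (hc : ∀ t, 0 ≤ c t)
    (x : ℝ → V) (xd : ℝ → H) (r : ℝ → ℝ)
    (hx : ∀ t ∈ Set.Icc (0:ℝ) T, HasDerivAt (fun s => ι (x s)) (xd t) t)
    (heq : ∀ t ∈ Set.Icc (0:ℝ) T, ⟪xd t, ι (x t)⟫ = -(a (x t) (x t)) + r t)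
    (hr : ∀ t ∈ Set.Icc (0:ℝ) T, |r t| ≤ c t * ‖x t‖ + (1/2) * ‖ι (x t)‖^2) :
    ∀ t ∈ Set.Icc (0:ℝ) T,
      deriv (fun s => (1/2) * ‖ι (x s)‖^2) t
        ≤ (ρ + 1/2) * ‖ι (x t)‖^2 - (θ/2) * ‖x t‖^2 + (c t)^2 / (2*θ) := by
  intro t ht
  have hd : HasDerivAt (fun s => (1/2 : ℝ) * ‖ι (x s)‖^2) ⟪xd t, ι (x t)⟫ t := by
    have h := ((hx t ht).inner ℝ (hx t ht)).const_mul (1/2 : ℝ)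
    have : (1/2 : ℝ) * (⟪ι (x t), xd t⟫ + ⟪xd t, ι (x t)⟫) = ⟪xd t, ι (x t)⟫ := by
      rw [real_inner_comm]; ring
    rw [this] at h
    have e : (fun s => (1/2 : ℝ) * ‖ι (x s)‖^2) = fun y => 1/2 * ⟪ι (x y), ι (x y)⟫ := by
      funext s
      rw [real_inner_self_eq_norm_sq]
    rw [e]
    exact h
  rw [hd.deriv, heq t ht]
  have hA : -(a (x t) (x t)) ≤ ρ * ‖ι (x t)‖^2 - θ * ‖x t‖^2 := by
    have := hgard (x t); linarith
  have hR : r t ≤ c t * ‖x t‖ + (1/2) * ‖ι (x t)‖^2 :=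
    le_trans (le_abs_self _) (hr t ht)
  have h2θ : (0:ℝ) < 2*θ := by linarith
  have hY : c t * ‖x t‖ - θ/2 * ‖x t‖^2 ≤ (c t)^2 / (2*θ) := by
    rw [le_div_iff₀ h2θ]
    nlinarith [sq_nonneg (c t - θ * ‖x t‖)]
  linarith
end
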